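/- Every finite abelian subgroup of Aut(𝔥₃) isomorphic to (ℤ₂)ᵏ with k ≥ 2 satisfies k = 2; i.e., Aut(𝔥₃) contains no subgroup isomorphic to (ℤ₂)³. -/
import Mathlib


/-- The Lie bracket of the 3-dimensional Heisenberg Lie algebra `𝔥₃` in the
basis `X₁, X₂, X₃` with `[X₁,X₂] = X₃` and `X₃` central, written in coordinates. -/
def heisBracket (x y : Fin 3 → ℝ) : Fin 3 → ℝ :=
  ![0, 0, x 0 * y 1 - x 1 * y 0]

/-- A matrix `M` (in the basis `X₁,X₂,X₃`) is a Lie algebra automorphism of `𝔥₃`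
iff it is invertible and preserves the bracket. -/
def IsHeisAut (M : Matrix (Fin 3) (Fin 3) ℝ) : Prop :=
  M.det ≠ 0 ∧ ∀ x y : Fin 3 → ℝ,
    M.mulVec (heisBracket x y) = heisBracket (M.mulVec x) (M.mulVec y)

lemma key_alg (a b c p q r : ℝ) (hA : a*a + b*c = 1) (hB : p*p + q*r = 1)
    (h1 : b*r = q*c) (h2 : p*b = a*q) (h3 : p*c = a*r) :
    (p = a ∧ q = b ∧ r = c) ∨ (p = -a ∧ q = -b ∧ r = -c) := by
  have e1 : a*q*(a*r) = p*b*(p*c) := by rw [← h2, ← h3]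
  have hpa : p*p = a*a := by nlinarith [e1, hA, hB]
  by_cases ha : a = 0
  · subst ha
    have hp : p = 0 := mul_self_eq_zero.mp (by simpa using hpa)
    subst hp
    have hbc : b*c = 1 := by linarith
    have hqr : q*r = 1 := by linarith
    have hb : b ≠ 0 := fun h => by simp [h] at hbc
    have hb2 : b*b = q*q := by linear_combination q*b*h1 - b*b*hqr + q*q*hbc
    have : (q - b) * (q + b) = 0 := by linear_combination -hb2
    rcases mul_eq_zero.mp this with h | h
    · have hqb : q = b := by linarith
      subst hqb
      left
      refine ⟨by simp, rfl, mul_left_cancel₀ hb h1⟩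
    · have hqb : q = -b := by linarith
      subst hqb
      right
      refine ⟨by simp, rfl, ?_⟩
      apply mul_left_cancel₀ hb
      rw [h1]; ring
  · have : (p - a) * (p + a) = 0 := by linear_combination hpa
    rcases mul_eq_zero.mp this with h | h
    · left
      have hp : p = a := by linarith
      subst hp
      exact ⟨rfl, mul_left_cancel₀ ha (by linarith [h2]),
        mul_left_cancel₀ ha (by linarith [h3])⟩
    · right
      have hp : p = -a := by linarith
      subst hp
      refine ⟨rfl, ?_, ?_⟩
      · apply mul_left_cancel₀ ha; rw [← h2]; ring
      · apply mul_left_cancel₀ ha; rw [← h3]; ring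

lemma inv2 (A : Matrix (Fin 2) (Fin 2) ℝ) (h : A * A = 1) :
    (A = 1 ∨ A = -1) ∨
      (A 1 1 = -(A 0 0) ∧ A 0 0 * A 0 0 + A 0 1 * A 1 0 = 1) := by
  have h00 := congrFun (congrFun h 0) 0
  have h01 := congrFun (congrFun h 0) 1
  have h10 := congrFun (congrFun h 1) 0
  have h11 := congrFun (congrFun h 1) 1
  simp [Matrix.mul_apply, Fin.sum_univ_two, Matrix.one_apply] at h00 h01 h10 h11
  by_cases htr : A 1 1 = -(A 0 0)
  · exact Or.inr ⟨htr, h00⟩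
  · left
    have hsum : A 0 0 + A 1 1 ≠ 0 := fun hs => htr (by linarith)
    have hb : A 0 1 = 0 := by
      rcases mul_eq_zero.mp (show A 0 1 * (A 0 0 + A 1 1) = 0 by linear_combination h01) with h | h
      · exact h
      · exact absurd h hsum
    have hc : A 1 0 = 0 := by
      rcases mul_eq_zero.mp (show A 1 0 * (A 0 0 + A 1 1) = 0 by linear_combination h10) with h | h
      · exact h
      · exact absurd h hsum
    have ha2 : A 0 0 * A 0 0 = 1 := by rw [hb] at h00; linarith [h00]
    have hd2 : A 1 1 * A 1 1 = 1 := by rw [hc] at h11; linarith [h11]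
    have had : A 1 1 = A 0 0 := by
      have : (A 1 1 - A 0 0) * (A 1 1 + A 0 0) = 0 := by linear_combination hd2 - ha2
      rcases mul_eq_zero.mp this with h | h
      · linarith
      · exact absurd (by linarith : A 0 0 + A 1 1 = 0) hsum
    rcases mul_self_eq_one_iff.mp ha2 with h1 | h1
    · left
      ext i j
      fin_cases i <;> fin_cases j <;>
        simp [Matrix.one_apply, h1, hb, hc, had]
    · right
      ext i j
      fin_cases i <;> fin_cases j <;>
        simp [Matrix.one_apply, h1, hb, hc, had]

lemma comm_classify (A B : Matrix (Fin 2) (Fin 2) ℝ) (hB2 : B * B = 1)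
    (hAt : A 1 1 = -(A 0 0)) (hAd : A 0 0 * A 0 0 + A 0 1 * A 1 0 = 1)
    (hc : A * B = B * A) : B = 1 ∨ B = -1 ∨ B = A ∨ B = -A := by
  rcases inv2 B hB2 with (h | h) | ⟨hBt, hBd⟩
  · exact Or.inl h
  · exact Or.inr (Or.inl h)
  · have c00 := congrFun (congrFun hc 0) 0
    have c01 := congrFun (congrFun hc 0) 1
    have c10 := congrFun (congrFun hc 1) 0
    simp [Matrix.mul_apply, Fin.sum_univ_two] at c00 c01 c10
    have h1 : A 0 1 * B 1 0 = B 0 1 * A 1 0 := by linarith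
    have h2 : B 0 0 * A 0 1 = A 0 0 * B 0 1 := by
      rw [hBt, hAt] at c01; linarith
    have h3 : B 0 0 * A 1 0 = A 0 0 * B 1 0 := by
      rw [hBt, hAt] at c10; linarith
    rcases key_alg (A 0 0) (A 0 1) (A 1 0) (B 0 0) (B 0 1) (B 1 0)
        hAd hBd h1 h2 h3 with ⟨e1, e2, e3⟩ | ⟨e1, e2, e3⟩
    · refine Or.inr (Or.inr (Or.inl ?_))
      ext i j
      fin_cases i <;> fin_cases j <;> simp [e1, e2, e3, hBt, hAt]
    · refine Or.inr (Or.inr (Or.inr ?_))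
      ext i j
      fin_cases i <;> fin_cases j <;>
        simp [Matrix.neg_apply, e1, e2, e3, hBt, hAt]

lemma two_by_two (A B C : Matrix (Fin 2) (Fin 2) ℝ)
    (hA : A * A = 1) (hB : B * B = 1) (hC : C * C = 1)
    (hAB : A * B = B * A) (hAC : A * C = C * A) (hBC : B * C = C * B) :
    A = 1 ∨ B = 1 ∨ C = 1 ∨ B = A ∨ C = A ∨ C = B ∨ C = A * B := by
  rcases inv2 A hA with (hA1 | hA1) | ⟨hAt, hAd⟩
  · exact Or.inl hA1
  · -- A = -1
    rcases inv2 B hB with (hB1 | hB1) | ⟨hBt, hBd⟩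
    · exact Or.inr (Or.inl hB1)
    · exact Or.inr <| Or.inr <| Or.inr <| Or.inl (hB1.trans hA1.symm)
    · rcases comm_classify B C hC hBt hBd hBC with h | h | h | h
      · exact Or.inr (Or.inr (Or.inl h))
      · exact Or.inr <| Or.inr <| Or.inr <| Or.inr <| Or.inl (h.trans hA1.symm)
      · exact Or.inr <| Or.inr <| Or.inr <| Or.inr <| Or.inr <| Or.inl h
      · refine Or.inr <| Or.inr <| Or.inr <| Or.inr <| Or.inr <| Or.inr ?_
        rw [hA1, h, neg_one_mul]
  · -- A traceless
    rcases comm_classify A B hB hAt hAd hAB with hB1 | hB1 | hB1 | hB1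
    · exact Or.inr (Or.inl hB1)
    · rcases comm_classify A C hC hAt hAd hAC with h | h | h | h
      · exact Or.inr (Or.inr (Or.inl h))
      · exact Or.inr <| Or.inr <| Or.inr <| Or.inr <| Or.inr <| Or.inl (h.trans hB1.symm)
      · exact Or.inr <| Or.inr <| Or.inr <| Or.inr <| Or.inl h
      · refine Or.inr <| Or.inr <| Or.inr <| Or.inr <| Or.inr <| Or.inr ?_
        rw [hB1, h, mul_neg_one]
    · exact Or.inr <| Or.inr <| Or.inr <| Or.inl hB1
    · rcases comm_classify A C hC hAt hAd hAC with h | h | h | h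
      · exact Or.inr (Or.inr (Or.inl h))
      · refine Or.inr <| Or.inr <| Or.inr <| Or.inr <| Or.inr <| Or.inr ?_
        rw [hB1, h, mul_neg, hA]  -- C = -1, A*B = A*(-A) = -(A*A) = -1
      · exact Or.inr <| Or.inr <| Or.inr <| Or.inr <| Or.inl h
      · exact Or.inr <| Or.inr <| Or.inr <| Or.inr <| Or.inr <| Or.inl (h.trans hB1.symm)

def topBlock (M : Matrix (Fin 3) (Fin 3) ℝ) : Matrix (Fin 2) (Fin 2) ℝ :=
  !![M 0 0, M 0 1; M 1 0, M 1 1]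

lemma heis_struct (M : Matrix (Fin 3) (Fin 3) ℝ) (h : IsHeisAut M) :
    M 0 2 = 0 ∧ M 1 2 = 0 ∧ M 2 2 = M 0 0 * M 1 1 - M 1 0 * M 0 1 := by
  obtain ⟨-, hb⟩ := h
  have h := hb ![1, 0, 0] ![0, 1, 0]
  have h0 := congrFun h 0
  have h1 := congrFun h 1
  have h2 := congrFun h 2
  simp [heisBracket, Matrix.mulVec, dotProduct, Fin.sum_univ_three] at h0 h1 h2
  exact ⟨h0, h1, by linarith⟩

lemma topBlock_one : topBlock 1 = 1 := by
  ext i j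
  fin_cases i <;> fin_cases j <;> simp [topBlock, Matrix.one_apply]

lemma topBlock_mul (M N : Matrix (Fin 3) (Fin 3) ℝ) (h0 : M 0 2 = 0) (h1 : M 1 2 = 0) :
    topBlock (M * N) = topBlock M * topBlock N := by
  ext i j
  fin_cases i <;> fin_cases j <;>
    simp [topBlock, Matrix.mul_apply, Fin.sum_univ_three, Fin.sum_univ_two, h0, h1]

lemma heis_eq_one (M : Matrix (Fin 3) (Fin 3) ℝ) (h : IsHeisAut M) (hMM : M * M = 1)
    (ht : topBlock M = 1) : M = 1 := by
  obtain ⟨e02, e12, e22⟩ := heis_struct M h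
  have t00 : M 0 0 = 1 := by simpa [topBlock] using congrFun (congrFun ht 0) 0
  have t01 : M 0 1 = 0 := by simpa [topBlock] using congrFun (congrFun ht 0) 1
  have t10 : M 1 0 = 0 := by simpa [topBlock] using congrFun (congrFun ht 1) 0
  have t11 : M 1 1 = 1 := by simpa [topBlock] using congrFun (congrFun ht 1) 1
  have e22' : M 2 2 = 1 := by rw [e22, t00, t11, t10, t01]; ring
  have h20 := congrFun (congrFun hMM 2) 0
  have h21 := congrFun (congrFun hMM 2) 1
  simp [Matrix.mul_apply, Fin.sum_univ_three, Matrix.one_apply, t00, t10, t01, t11, e22'] at h20 h21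
  have m20 : M 2 0 = 0 := by linarith
  have m21 : M 2 1 = 0 := by linarith
  ext i j
  fin_cases i <;> fin_cases j <;>
    simp [Matrix.one_apply, t00, t01, t10, t11, e02, e12, e22', m20, m21]

/-- `Aut(𝔥₃)` contains no subgroup isomorphic to `(ℤ₂)³`; hence any finite
abelian subgroup of `Aut(𝔥₃)` isomorphic to `(ℤ₂)ᵏ` with `k ≥ 2` has `k = 2`. -/
theorem no_Z2_cubed_in_heisAut :
    ¬ ∃ H : Subgroup (Matrix (Fin 3) (Fin 3) ℝ)ˣ,
      (∀ u ∈ H, IsHeisAut (u : Matrix (Fin 3) (Fin 3) ℝ)) ∧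
      Nonempty (H ≃* (Multiplicative (ZMod 2) × Multiplicative (ZMod 2) ×
        Multiplicative (ZMod 2))) := by
  rintro ⟨H, hmem, ⟨e⟩⟩
  set T := Multiplicative (ZMod 2) × Multiplicative (ZMod 2) × Multiplicative (ZMod 2) with hT
  have hTsq : ∀ t : T, t * t = 1 := by decide
  have hsq : ∀ g : H, g * g = 1 := fun g =>
    e.injective (by rw [map_mul, map_one]; exact hTsq (e g))
  have hcomm : ∀ g h : H, g * h = h * g := fun g h =>
    e.injective (by rw [map_mul, map_mul, mul_comm])
  set x : Multiplicative (ZMod 2) := Multiplicative.ofAdd 1 with hx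
  set u : H := e.symm (x, 1, 1) with hu
  set v : H := e.symm (1, x, 1) with hv
  set w : H := e.symm (1, 1, x) with hw
  set m : H → Matrix (Fin 3) (Fin 3) ℝ :=
    fun g => ((g : (Matrix (Fin 3) (Fin 3) ℝ)ˣ) : Matrix (Fin 3) (Fin 3) ℝ) with hm
  have hm_mul : ∀ g h : H, m (g * h) = m g * m h := fun g h => rfl
  have hm_one : m 1 = 1 := rfl
  have hm_inj : Function.Injective m := fun g h hgh => Subtype.ext (Units.ext hgh)
  have hm_aut : ∀ g : H, IsHeisAut (m g) := fun g => hmem g g.2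
  have hone : ∀ g : H, topBlock (m g) = 1 → g = 1 := by
    intro g ht
    have hMM : m g * m g = 1 := by rw [← hm_mul, hsq, hm_one]
    exact hm_inj ((heis_eq_one _ (hm_aut g) hMM ht).trans hm_one.symm)
  have htb : ∀ g h : H, topBlock (m (g * h)) = topBlock (m g) * topBlock (m h) := by
    intro g h
    rw [hm_mul]
    exact topBlock_mul _ _ (heis_struct _ (hm_aut g)).1 (heis_struct _ (hm_aut g)).2.1
  have hsqtb : ∀ g : H, topBlock (m g) * topBlock (m g) = 1 := by
    intro g
    rw [← htb, hsq, hm_one, topBlock_one]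
  have hctb : ∀ g h : H, topBlock (m g) * topBlock (m h) = topBlock (m h) * topBlock (m g) := by
    intro g h
    rw [← htb, ← htb, hcomm]
  -- an element of H equal to 1 forces its e-image to be 1
  have hne : ∀ (t : T), t ≠ 1 → e.symm t ≠ 1 := by
    intro t htne h1
    exact htne (by rw [← e.apply_symm_apply t, h1, map_one])
  rcases two_by_two (topBlock (m u)) (topBlock (m v)) (topBlock (m w))
      (hsqtb u) (hsqtb v) (hsqtb w) (hctb u v) (hctb u w) (hctb v w) with
    h | h | h | h | h | h | h
  · exact hne (x, 1, 1) (by decide) (hone u h)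
  · exact hne (1, x, 1) (by decide) (hone v h)
  · exact hne (1, 1, x) (by decide) (hone w h)
  · -- B = A : u * v = 1
    have : topBlock (m (u * v)) = 1 := by rw [htb, h, hsqtb]
    have h1 : u * v = 1 := hone _ this
    have : ((x, 1, 1) : T) * (1, x, 1) = 1 := by
      rw [← e.apply_symm_apply ((x, 1, 1) : T), ← e.apply_symm_apply ((1, x, 1) : T),
        ← map_mul, ← hu, ← hv, h1, map_one]
    exact absurd this (by decide)
  · have : topBlock (m (u * w)) = 1 := by rw [htb, h, hsqtb]
    have h1 : u * w = 1 := hone _ this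
    have : ((x, 1, 1) : T) * (1, 1, x) = 1 := by
      rw [← e.apply_symm_apply ((x, 1, 1) : T), ← e.apply_symm_apply ((1, 1, x) : T),
        ← map_mul, ← hu, ← hw, h1, map_one]
    exact absurd this (by decide)
  · have : topBlock (m (v * w)) = 1 := by rw [htb, h, hsqtb]
    have h1 : v * w = 1 := hone _ this
    have : ((1, x, 1) : T) * (1, 1, x) = 1 := by
      rw [← e.apply_symm_apply ((1, x, 1) : T), ← e.apply_symm_apply ((1, 1, x) : T),
        ← map_mul, ← hv, ← hw, h1, map_one]
    exact absurd this (by decide)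
  · -- C = A * B : u * v * w = 1
    have : topBlock (m (u * v * w)) = 1 := by
      rw [htb, htb, h]
      calc topBlock (m u) * topBlock (m v) * (topBlock (m u) * topBlock (m v))
          = topBlock (m u) * (topBlock (m v) * topBlock (m u)) * topBlock (m v) := by
            rw [mul_assoc, mul_assoc, mul_assoc]
        _ = topBlock (m u) * (topBlock (m u) * topBlock (m v)) * topBlock (m v) := by
            rw [hctb v u]
        _ = (topBlock (m u) * topBlock (m u)) * (topBlock (m v) * topBlock (m v)) := by
            rw [mul_assoc, mul_assoc, mul_assoc]
        _ = 1 := by rw [hsqtb, hsqtb, mul_one]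
    have h1 : u * v * w = 1 := hone _ this
    have : ((x, 1, 1) : T) * (1, x, 1) * (1, 1, x) = 1 := by
      rw [← e.apply_symm_apply ((x, 1, 1) : T), ← e.apply_symm_apply ((1, x, 1) : T),
        ← e.apply_symm_apply ((1, 1, x) : T), ← map_mul, ← map_mul, ← hu, ← hv, ← hw,
        h1, map_one]
    exact absurd this (by decide)
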